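/- arXiv:1901.01576 — 2 statements merged into one kernel-verified Lean document; each statement's English description precedes it below -/
import Mathlib

section
/- Let F < 0, h > 0, and x_i, x_j ∈ ℝ with |x_j| ≥ |x_i| and x_j > x_i ≥ 0 or more generally x_j > x_i and |x_j| > |x_i|. Define E(t) = (2 e^{Fh}(x_j − x_i e^{Fh}) sinh(Ft))/(e^{2Fh} − 1) + x_i e^{Ft}. Then for all t ∈ (0, h), E(t) < x_j. -/
theorem stmt_15 (F h x_i x_j : ℝ) (hF : F < 0) (hh : 0 < h)
    (hlt : x_i < x_j) (habs : |x_i| < |x_j|)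
    (E : ℝ → ℝ)
    (hE : ∀ t, E t = (2 * Real.exp (F * h) * (x_j - x_i * Real.exp (F * h)) * Real.sinh (F * t))
        / (Real.exp (2 * F * h) - 1) + x_i * Real.exp (F * t)) :
    ∀ t ∈ Set.Ioo 0 h, E t < x_j := by
  intro t ht
  obtain ⟨ht0, hth⟩ := ht
  have hxj : 0 < x_j := by
    by_contra hc
    push_neg at hc
    rw [abs_of_nonpos hc] at habs
    have h1 := neg_abs_le x_i
    linarith
  rw [hE, Real.sinh_eq, Real.exp_neg]
  have h2 : Real.exp (2 * F * h) = Real.exp (F * h) ^ 2 := by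
    rw [show 2 * F * h = F * h + F * h by ring, Real.exp_add]; ring
  rw [h2]
  set a := Real.exp (F * h) with ha
  set s := Real.exp (F * t) with hs
  have ha0 : 0 < a := Real.exp_pos _
  have hs0 : 0 < s := Real.exp_pos _
  have ha1 : a < 1 := by
    rw [ha, ← Real.exp_zero]
    exact Real.exp_lt_exp.mpr (by nlinarith)
  have has : a < s := Real.exp_lt_exp.mpr (by nlinarith)
  have hs1 : s < 1 := by
    rw [hs, ← Real.exp_zero]
    exact Real.exp_lt_exp.mpr (by nlinarith)
  have hden : a ^ 2 - 1 < 0 := by nlinarith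
  have hLa : 0 < (1 + a ^ 2) * x_j - 2 * a * x_i := by
    nlinarith [mul_nonneg (sq_nonneg (1 - a)) hxj.le, mul_pos ha0 (sub_pos.mpr hlt)]
  have hL1 : 0 < (1 + a) * (x_j - x_i) := mul_pos (by linarith) (by linarith)
  have hL : 0 < (a * x_j - x_i) * s + (x_j - a * x_i) := by
    nlinarith [mul_pos (sub_pos.mpr hs1) hLa, mul_pos (sub_pos.mpr has) hL1,
      sub_pos.mpr ha1]
  have hG : 0 < (s - a) * ((a * x_j - x_i) * s + (x_j - a * x_i)) :=
    mul_pos (by linarith) hL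
  have key : 2 * a * (x_j - x_i * a) * ((s - s⁻¹) / 2) / (a ^ 2 - 1) < x_j - x_i * s := by
    rw [div_lt_iff_of_neg hden, ← sub_pos]
    have heq : 2 * a * (x_j - x_i * a) * ((s - s⁻¹) / 2) - (x_j - x_i * s) * (a ^ 2 - 1)
        = (s - a) * ((a * x_j - x_i) * s + (x_j - a * x_i)) / s := by
      field_simp
      ring
    rw [heq]
    exact div_pos hG hs0
  linarith
end

section
/- Let F < 0, h > 0, and x_i, x_j ∈ ℝ. Define E(t) = (2 e^{Fh}(x_j − x_i e^{Fh}) sinh(Ft))/(e^{2Fh} − 1) + x_i e^{Ft}. Then for all t ∈ [0, h], |E(t)| ≤ max(|x_i|, |x_j|). -/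
theorem stmt_16 (F h x_i x_j : ℝ) (hF : F < 0) (hh : 0 < h)
    (E : ℝ → ℝ)
    (hE : ∀ t, E t = (2 * Real.exp (F * h) * (x_j - x_i * Real.exp (F * h)) * Real.sinh (F * t))
        / (Real.exp (2 * F * h) - 1) + x_i * Real.exp (F * t)) :
    ∀ t ∈ Set.Icc 0 h, |E t| ≤ max |x_i| |x_j| := by
  rintro t ⟨ht0, hth⟩
  have hSpos : 0 < Real.sinh (-(F*h)) := Real.sinh_pos_iff.mpr (by nlinarith)
  have hs : Real.sinh (-(F*h)) ≠ 0 := ne_of_gt hSpos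
  have hB1 : Real.exp (2*F*h) - 1 ≠ 0 := by
    have : Real.exp (2*F*h) < 1 := by
      rw [← Real.exp_zero]; exact Real.exp_lt_exp.mpr (by nlinarith)
    linarith
  have hA : Real.exp (F*t) ≠ 0 := Real.exp_ne_zero _
  have hB : Real.exp (F*h) ≠ 0 := Real.exp_ne_zero _
  have e1 : Real.exp (2*F*h) = Real.exp (F*h) * Real.exp (F*h) := by
    rw [← Real.exp_add]; ring_nf
  have e2 : Real.exp (-(F*t)) = (Real.exp (F*t))⁻¹ := Real.exp_neg _
  have e3 : Real.exp (-(F*h)) = (Real.exp (F*h))⁻¹ := Real.exp_neg _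
  have e4 : Real.exp (-(F*(h-t))) = Real.exp (F*t) / Real.exp (F*h) := by
    rw [show -(F*(h-t)) = F*t - F*h by ring, Real.exp_sub]
  have e5 : Real.exp (F*(h-t)) = Real.exp (F*h) / Real.exp (F*t) := by
    rw [show F*(h-t) = F*h - F*t by ring, Real.exp_sub]
  have key : E t = (x_i * Real.sinh (-(F*(h-t))) + x_j * Real.sinh (-(F*t)))
      / Real.sinh (-(F*h)) := by
    rw [eq_div_iff hs, hE]
    simp only [Real.sinh_eq, neg_neg]
    rw [e1, e2, e3, e4, e5]
    have hB1' : Real.exp (F*h) * Real.exp (F*h) - 1 ≠ 0 := by rw [e1] at hB1; exact hB1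
    have hB1'' : Real.exp (F*h)^2 - 1 ≠ 0 := by rw [sq]; exact hB1'
    field_simp
    ring
  have hs1 : 0 ≤ Real.sinh (-(F*(h-t))) := Real.sinh_nonneg_iff.mpr (by nlinarith)
  have hs2 : 0 ≤ Real.sinh (-(F*t)) := Real.sinh_nonneg_iff.mpr (by nlinarith)
  have hsum : Real.sinh (-(F*(h-t))) + Real.sinh (-(F*t)) ≤ Real.sinh (-(F*h)) := by
    have hadd : Real.sinh (-(F*h)) =
        Real.sinh (-(F*(h-t))) * Real.cosh (-(F*t))
        + Real.cosh (-(F*(h-t))) * Real.sinh (-(F*t)) := by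
      rw [← Real.sinh_add]; ring_nf
    have hc1 : 1 ≤ Real.cosh (-(F*t)) := Real.one_le_cosh _
    have hc2 : 1 ≤ Real.cosh (-(F*(h-t))) := Real.one_le_cosh _
    nlinarith
  set M := max |x_i| |x_j| with hM
  have hxi : |x_i| ≤ M := le_max_left _ _
  have hxj : |x_j| ≤ M := le_max_right _ _
  have hM0 : 0 ≤ M := le_trans (abs_nonneg _) hxi
  rw [key, abs_div, abs_of_pos hSpos, div_le_iff₀ hSpos]
  have habs : |x_i * Real.sinh (-(F*(h-t))) + x_j * Real.sinh (-(F*t))|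
      ≤ |x_i| * Real.sinh (-(F*(h-t))) + |x_j| * Real.sinh (-(F*t)) := by
    calc |x_i * Real.sinh (-(F*(h-t))) + x_j * Real.sinh (-(F*t))|
        ≤ |x_i * Real.sinh (-(F*(h-t)))| + |x_j * Real.sinh (-(F*t))| := abs_add_le _ _
      _ = |x_i| * Real.sinh (-(F*(h-t))) + |x_j| * Real.sinh (-(F*t)) := by
          rw [abs_mul, abs_mul, abs_of_nonneg hs1, abs_of_nonneg hs2]
  nlinarith
end
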